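/- Let 0<x<1 be real, and let r, s be complex numbers with 0<Re(r)<1 and Re(s)>1; set r* := r−1. Then for every complex z with |z|<1 the series ∑_{m=1}^∞ (1/m)·(1−x^{2rm})(1−x^{−2r*m})(1−x^{2(s−1)m})/(1−x^{2sm})·z^m converges absolutely, and its exponential f₁₁(z) satisfies the product formula f₁₁(z) = (1/(1−z)) · (x^{2s−2}z;x^{2s})_∞ (x^{2r}z;x^{2s})_∞ (x^{−2r*}z;x^{2s})_∞ / ( (x²z;x^{2s})_∞ (x^{2r*+2s}z;x^{2s})_∞ (x^{2s−2r}z;x^{2s})_∞ ). -/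

import Mathlib

open Complex

/-- `x^w := exp(w · log x)` for real `x` and complex `w`. -/
noncomputable def xpow (x : ℝ) (w : ℂ) : ℂ := Complex.exp (w * (Real.log x : ℂ))

/-- The infinite `q`-Pochhammer product `(z;q)_∞ = ∏_{j=0}^∞ (1 − q^j z)`. -/
noncomputable def qPoch (z q : ℂ) : ℂ := ∏' j : ℕ, (1 - q ^ j * z)

/-- `Θ_q(z) = (z;q)_∞ (q z⁻¹;q)_∞ (q;q)_∞`. -/
noncomputable def jacTheta0 (q z : ℂ) : ℂ := qPoch z q * qPoch (q * z⁻¹) q * qPoch q q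

/-- The Jacobi theta function `[u]_r = x^{u²/r − u} Θ_{x^{2r}}(x^{2u}) / ((x^{2r};x^{2r})_∞)³`. -/
noncomputable def jTheta (x : ℝ) (r u : ℂ) : ℂ :=
  xpow x (u ^ 2 / r - u) * jacTheta0 (xpow x (2 * r)) (xpow x (2 * u)) /
    (qPoch (xpow x (2 * r)) (xpow x (2 * r))) ^ 3

/-- The `m`-th term of the defining series of `f₁₁(z)` (with `r* = r − 1`). -/
noncomputable def f11term (x : ℝ) (r s z : ℂ) (m : ℕ) : ℂ :=
  (1 / (m : ℂ)) * (1 - xpow x (2 * r * m)) * (1 - xpow x (-2 * (r - 1) * m)) *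
    (1 - xpow x (2 * (s - 1) * m)) / (1 - xpow x (2 * s * m)) * z ^ m

/-!
With `a = x^{2r}`, `b = x^{-2r*}`, `c = x^{2(s-1)}` one has `abc = x^{2s} =: q`, and expanding
`(1 - aᵐ)(1 - bᵐ)(1 - cᵐ) = (1 - qᵐ) - aᵐ - bᵐ - cᵐ + (ab)ᵐ + (ac)ᵐ + (bc)ᵐ` splits the series
into `-log (1 - z)` and six series of the form `∑ₘ tᵐ / (m (1 - qᵐ))`. Each of these equals
`-log (t;q)_∞`: expand `1 / (1 - qᵐ)` geometrically and exchange the order of the absolutely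
convergent double sum `∑ⱼ ∑ₘ (qʲ t)ᵐ / m`. Exponentiating gives the product formula.
-/

theorem xpow_add (x : ℝ) (u v : ℂ) : xpow x (u + v) = xpow x u * xpow x v := by
  rw [xpow, xpow, xpow, ← Complex.exp_add, add_mul]

theorem xpow_mul_natCast (x : ℝ) (w : ℂ) (n : ℕ) : xpow x (w * n) = xpow x w ^ n := by
  rw [xpow, xpow, ← Complex.exp_nat_mul]
  ring_nf

theorem norm_xpow_lt_one {x : ℝ} (hx0 : 0 < x) (hx1 : x < 1) {w : ℂ} (hw : 0 < w.re) :
    ‖xpow x w‖ < 1 := by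
  rw [xpow, Complex.norm_exp, Real.exp_lt_one_iff]
  simpa using mul_neg_of_pos_of_neg hw (Real.log_neg hx0 hx1)

theorem norm_mul_lt_one {u v : ℂ} (hu : ‖u‖ < 1) (hv : ‖v‖ < 1) : ‖u * v‖ < 1 := by
  rw [norm_mul]
  exact mul_lt_one_of_nonneg_of_lt_one_left (norm_nonneg u) hu hv.le

theorem one_sub_ne_zero_of_norm_lt_one {u : ℂ} (hu : ‖u‖ < 1) : 1 - u ≠ 0 := by
  rintro h
  simp [← sub_eq_zero.1 h] at hu

section QPochhammer

variable {q t : ℂ}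

/-- The `n = 0` term is `0` since `x / 0 = 0`, so summing over all `n : ℕ` gives `∑_{n ≥ 1}`. -/
noncomputable def qLogTerm (q t : ℂ) (n : ℕ) : ℂ := t ^ n / (n * (1 - q ^ n))

theorem summable_pow_mul_pow_div (hq : ‖q‖ < 1) (ht : ‖t‖ < 1) :
    Summable fun p : ℕ × ℕ => (q ^ p.1 * t) ^ p.2 / p.2 := by
  have hgeom : Summable fun p : ℕ × ℕ => ‖q‖ ^ p.1 * ‖t‖ ^ p.2 :=
    (summable_geometric_of_lt_one (norm_nonneg q) hq).mul_of_nonneg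
      (summable_geometric_of_lt_one (norm_nonneg t) ht)
      (fun _ => by positivity) (fun _ => by positivity)
  refine Summable.of_norm (hgeom.of_nonneg_of_le (fun _ => norm_nonneg _) ?_)
  rintro ⟨j, _ | n⟩
  · simp
  · have hqj : ‖q‖ ^ j ≤ 1 := pow_le_one₀ (norm_nonneg q) hq.le
    calc ‖(q ^ j * t) ^ (n + 1) / ↑(n + 1)‖
        ≤ (‖q‖ ^ j) ^ (n + 1) * ‖t‖ ^ (n + 1) := by
          rw [norm_div, Complex.norm_natCast, norm_pow, norm_mul, norm_pow, mul_pow]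
          exact div_le_self (by positivity) (by simp)
      _ ≤ ‖q‖ ^ j * ‖t‖ ^ (n + 1) := by
          gcongr
          exact pow_le_of_le_one (by positivity) hqj n.succ_ne_zero

theorem hasSum_pow_mul_pow_div_qLogTerm (hq : ‖q‖ < 1) (n : ℕ) :
    HasSum (fun j : ℕ => (q ^ j * t) ^ n / n) (qLogTerm q t n) := by
  rcases n.eq_zero_or_pos with rfl | hn
  · simp [qLogTerm]
  have hqn : ‖q ^ n‖ < 1 := by
    rw [norm_pow]
    exact pow_lt_one₀ (norm_nonneg q) hq hn.ne'
  rw [qLogTerm, ← div_div, div_eq_inv_mul]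
  refine ((hasSum_geometric_of_norm_lt_one hqn).mul_right (t ^ n / n)).congr_fun fun j => ?_
  rw [mul_pow, ← pow_mul, mul_comm j n, pow_mul, mul_div_assoc]

theorem norm_pow_mul_lt_one (hq : ‖q‖ < 1) (ht : ‖t‖ < 1) (j : ℕ) : ‖q ^ j * t‖ < 1 := by
  rw [norm_mul, norm_pow]
  exact mul_lt_one_of_nonneg_of_lt_one_right (pow_le_one₀ (norm_nonneg q) hq.le)
    (norm_nonneg t) ht

theorem hasSum_qLogTerm (hq : ‖q‖ < 1) (ht : ‖t‖ < 1) :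
    HasSum (qLogTerm q t) (∑' j : ℕ, -Complex.log (1 - q ^ j * t)) := by
  have hF := (summable_pow_mul_pow_div hq ht).hasSum
  have hrows : HasSum (fun j : ℕ => -Complex.log (1 - q ^ j * t))
      (∑' p : ℕ × ℕ, (q ^ p.1 * t) ^ p.2 / p.2) :=
    hF.prod_fiberwise fun j => (hasSum_taylorSeries_neg_log (norm_pow_mul_lt_one hq ht j) :)
  have hcols : HasSum (qLogTerm q t) (∑' p : ℕ × ℕ, (q ^ p.1 * t) ^ p.2 / p.2) :=
    ((Equiv.prodComm ℕ ℕ).hasSum_iff.2 hF).prod_fiberwise fun n =>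
      hasSum_pow_mul_pow_div_qLogTerm hq n
  rwa [← hrows.tsum_eq] at hcols

theorem cexp_tsum_qLogTerm (hq : ‖q‖ < 1) (ht : ‖t‖ < 1) :
    Complex.exp (∑' n, qLogTerm q t n) = (qPoch t q)⁻¹ := by
  have hlog : Summable fun j : ℕ => Complex.log (1 - q ^ j * t) := by
    simpa [sub_eq_add_neg] using Complex.summable_log_one_add_of_summable
      ((summable_geometric_of_norm_lt_one hq).mul_right t).neg
  rw [(hasSum_qLogTerm hq ht).tsum_eq, tsum_neg, Complex.exp_neg,
    Complex.cexp_tsum_eq_tprod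
      (fun j => one_sub_ne_zero_of_norm_lt_one (norm_pow_mul_lt_one hq ht j)) hlog, qPoch]

end QPochhammer

section TripleProduct

variable {a b c z : ℂ}

noncomputable def tripleTerm (a b c z : ℂ) (n : ℕ) : ℂ :=
  (1 / (n : ℂ)) * (1 - a ^ n) * (1 - b ^ n) * (1 - c ^ n) / (1 - (a * b * c) ^ n) * z ^ n

theorem tripleTerm_eq (habc : ‖a * b * c‖ < 1) (n : ℕ) :
    tripleTerm a b c z n = z ^ n / n - qLogTerm (a * b * c) (a * z) n -
      qLogTerm (a * b * c) (b * z) n - qLogTerm (a * b * c) (c * z) n +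
      qLogTerm (a * b * c) (a * b * z) n + qLogTerm (a * b * c) (a * c * z) n +
      qLogTerm (a * b * c) (b * c * z) n := by
  rcases n.eq_zero_or_pos with rfl | hn
  · simp [tripleTerm, qLogTerm]
  have hq : 1 - (a * b * c) ^ n ≠ 0 := one_sub_ne_zero_of_norm_lt_one
    (by rw [norm_pow]; exact pow_lt_one₀ (norm_nonneg _) habc hn.ne')
  have hn' : (n : ℂ) ≠ 0 := Nat.cast_ne_zero.2 hn.ne'
  simp only [tripleTerm, qLogTerm, mul_pow] at hq ⊢
  field_simp
  ring

theorem hasSum_tripleTerm (ha : ‖a‖ < 1) (hb : ‖b‖ < 1) (hc : ‖c‖ < 1) (hz : ‖z‖ < 1) :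
    HasSum (tripleTerm a b c z) (-Complex.log (1 - z) - ∑' n, qLogTerm (a * b * c) (a * z) n -
      ∑' n, qLogTerm (a * b * c) (b * z) n - ∑' n, qLogTerm (a * b * c) (c * z) n +
      ∑' n, qLogTerm (a * b * c) (a * b * z) n + ∑' n, qLogTerm (a * b * c) (a * c * z) n +
      ∑' n, qLogTerm (a * b * c) (b * c * z) n) := by
  have hq : ‖a * b * c‖ < 1 := norm_mul_lt_one (norm_mul_lt_one ha hb) hc
  have hser {t : ℂ} (ht : ‖t‖ < 1) := (hasSum_qLogTerm hq ht).summable.hasSum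
  refine (((((((hasSum_taylorSeries_neg_log hz).sub (hser (norm_mul_lt_one ha hz))).sub
    (hser (norm_mul_lt_one hb hz))).sub (hser (norm_mul_lt_one hc hz))).add
    (hser (norm_mul_lt_one (norm_mul_lt_one ha hb) hz))).add
    (hser (norm_mul_lt_one (norm_mul_lt_one ha hc) hz))).add
    (hser (norm_mul_lt_one (norm_mul_lt_one hb hc) hz))).congr_fun (tripleTerm_eq hq)

theorem cexp_tsum_tripleTerm (ha : ‖a‖ < 1) (hb : ‖b‖ < 1) (hc : ‖c‖ < 1) (hz : ‖z‖ < 1) :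
    Complex.exp (∑' n, tripleTerm a b c z n) =
      (1 - z)⁻¹ * (qPoch (a * z) (a * b * c) * qPoch (b * z) (a * b * c) *
        qPoch (c * z) (a * b * c)) / (qPoch (a * b * z) (a * b * c) *
        qPoch (a * c * z) (a * b * c) * qPoch (b * c * z) (a * b * c)) := by
  have hq : ‖a * b * c‖ < 1 := norm_mul_lt_one (norm_mul_lt_one ha hb) hc
  rw [(hasSum_tripleTerm ha hb hc hz).tsum_eq]
  simp only [Complex.exp_add, Complex.exp_sub, Complex.exp_neg,
    Complex.exp_log (one_sub_ne_zero_of_norm_lt_one hz),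
    cexp_tsum_qLogTerm hq (norm_mul_lt_one ha hz), cexp_tsum_qLogTerm hq (norm_mul_lt_one hb hz),
    cexp_tsum_qLogTerm hq (norm_mul_lt_one hc hz),
    cexp_tsum_qLogTerm hq (norm_mul_lt_one (norm_mul_lt_one ha hb) hz),
    cexp_tsum_qLogTerm hq (norm_mul_lt_one (norm_mul_lt_one ha hc) hz),
    cexp_tsum_qLogTerm hq (norm_mul_lt_one (norm_mul_lt_one hb hc) hz)]
  simp only [div_eq_mul_inv, mul_inv, inv_inv]
  ring

end TripleProduct

theorem f11term_eq_tripleTerm (x : ℝ) (r s z : ℂ) :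
    f11term x r s z =
      tripleTerm (xpow x (2 * r)) (xpow x (-2 * (r - 1))) (xpow x (2 * (s - 1))) z := by
  have habc :
      xpow x (2 * s) = xpow x (2 * r) * xpow x (-2 * (r - 1)) * xpow x (2 * (s - 1)) := by
    rw [← xpow_add, ← xpow_add]
    ring_nf
  ext n
  simp only [f11term, tripleTerm, xpow_mul_natCast, habc]

theorem stmt5 (x : ℝ) (hx0 : 0 < x) (hx1 : x < 1) (r s : ℂ)
    (hr0 : 0 < r.re) (hr1 : r.re < 1) (hs : 1 < s.re) (z : ℂ) (hz : ‖z‖ < 1) :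
    Summable (fun m : ℕ => ‖f11term x r s z (m + 1)‖) ∧
    Complex.exp (∑' m : ℕ, f11term x r s z (m + 1)) =
      (1 / (1 - z)) *
        (qPoch (xpow x (2 * s - 2) * z) (xpow x (2 * s)) *
          qPoch (xpow x (2 * r) * z) (xpow x (2 * s)) *
          qPoch (xpow x (-2 * (r - 1)) * z) (xpow x (2 * s))) /
        (qPoch (xpow x 2 * z) (xpow x (2 * s)) *
          qPoch (xpow x (2 * (r - 1) + 2 * s) * z) (xpow x (2 * s)) *
          qPoch (xpow x (2 * s - 2 * r) * z) (xpow x (2 * s))) := by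
  have ha : ‖xpow x (2 * r)‖ < 1 := norm_xpow_lt_one hx0 hx1 (by simpa using hr0)
  have hb : ‖xpow x (-2 * (r - 1))‖ < 1 :=
    norm_xpow_lt_one hx0 hx1 (by simpa using show 2 * (r.re - 1) < 0 by linarith)
  have hc : ‖xpow x (2 * (s - 1))‖ < 1 := norm_xpow_lt_one hx0 hx1 (by simpa using hs)
  have hsum := (hasSum_tripleTerm ha hb hc hz).summable
  rw [← f11term_eq_tripleTerm] at hsum
  have hshift : ∑' m, f11term x r s z (m + 1) = ∑' m, f11term x r s z m := by
    rw [hsum.tsum_eq_zero_add]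
    simp [f11term]
  refine ⟨((summable_nat_add_iff 1).2 hsum).norm, ?_⟩
  rw [hshift, f11term_eq_tripleTerm, cexp_tsum_tripleTerm ha hb hc hz]
  simp only [← xpow_add]
  ring_nf
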